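/- Let G and H be groups and let φ : G → H be a surjective group homomorphism whose kernel is contained in the center of G (i.e., G is a central extension of H). If H is finite, then the commutator subgroup [G, G] is finite. -/

import Mathlib

/-!
The kernel of `φ` has finite index since `H` is finite, hence so does the centre it lies in. A
commutator `⁅g, h⁆` only depends on the cosets of `g` and `h` modulo the centre, so `G` has only
finitely many commutators, and Schur's theorem in Mathlib (the `Finite (commutator G)` instance of
`Mathlib.GroupTheory.Schreier`) concludes.
-/

open scoped commutatorElement

namespace Subgroup

variable {G : Type*} [Group G]

theorem commutatorElement_mul_mul_of_mem_center (g h : G) {z w : G} (hz : z ∈ center G)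
    (hw : w ∈ center G) : ⁅g * z, h * w⁆ = ⁅g, h⁆ := by
  rw [mem_center_iff] at hz hw
  simp only [commutatorElement_def, mul_inv_rev]
  calc g * z * (h * w) * (z⁻¹ * g⁻¹) * (w⁻¹ * h⁻¹)
      = g * (z * (h * w)) * z⁻¹ * g⁻¹ * w⁻¹ * h⁻¹ := by group
    _ = g * h * (w * g⁻¹) * w⁻¹ * h⁻¹ := by rw [← hz]; group
    _ = g * h * g⁻¹ * h⁻¹ := by rw [← hw]; group

theorem commutatorElement_out_mk_center (g h : G) :
    ⁅(g : G ⧸ center G).out, (h : G ⧸ center G).out⁆ = ⁅g, h⁆ := by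
  obtain ⟨z, hz⟩ := QuotientGroup.mk_out_eq_mul (center G) g
  obtain ⟨w, hw⟩ := QuotientGroup.mk_out_eq_mul (center G) h
  rw [hz, hw, commutatorElement_mul_mul_of_mem_center g h z.2 w.2]

theorem commutatorSet_subset_range_out_center :
    commutatorSet G ⊆
      Set.range fun p : (G ⧸ center G) × (G ⧸ center G) ↦ ⁅p.1.out, p.2.out⁆ := by
  rintro _ ⟨g, h, rfl⟩
  exact ⟨(g, h), commutatorElement_out_mk_center g h⟩

instance finite_commutatorSet_of_finiteIndex_center [(center G).FiniteIndex] :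
    Finite (commutatorSet G) :=
  ((Set.finite_range _).subset commutatorSet_subset_range_out_center).to_subtype

end Subgroup

theorem commutator_finite_of_central_extension_of_finite
    {G H : Type*} [Group G] [Group H] (φ : G →* H)
    (hker : φ.ker ≤ Subgroup.center G)
    (hH : Finite H) :
    Finite ↥(commutator G) := by
  have : (Subgroup.center G).FiniteIndex := Subgroup.finiteIndex_of_le hker
  infer_instance
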